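/- (Lemma 1) Let p(x) = Σ_{n∈I₁} αₙ N(x; μₙ, Pₙ) and q(x) = Σ_{m∈I₂} βₘ N(x; mₘ, Sₘ) be two finite Gaussian mixtures on ℝ^d with symmetric positive-definite covariances. Fix n ∈ I₁ and hold all weights other than αₙ fixed. Then the value αₙ* = (2π)^{d/2} (det(2Pₙ))^{1/2} · [ Σ_{m∈I₂} βₘ N(μₙ; mₘ, Pₙ + Sₘ) − Σ_{n'∈I₁, n'≠n} α_{n'} N(μₙ; μ_{n'}, Pₙ + P_{n'}) ] is the unique global minimizer over αₙ ∈ ℝ of the map αₙ ↦ ISD(p‖q). -/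

import Mathlib

/-!
As a function of the single weight `t = αₙ`, the residual `p - q` is `t • g + r` with
`g = N(·; μₙ, Pₙ)` and `r` a fixed finite combination of Gaussian densities, all in `L²`.
Hence `ISD(p‖q) = t² ‖g‖² + 2 t ⟪g, r⟫ + ‖r‖²` is a quadratic with positive leading coefficient,
uniquely minimised at `t = -⟪g, r⟫ / ‖g‖²`. Both inner products are evaluated with the product rule
`∫ N(x; a, A) N(x; b, B) dx = N(a; b, A + B)`, which follows by completing the square from
`∫ exp(-xᵀ M x / 2) dx = √((2π)^d / det M)`; the latter reduces to the standard Gaussian integral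
by the substitution `y = M^{1/2} x`.
-/

open MeasureTheory Real Matrix Finset

/-- The multivariate Gaussian density
`N(x; μ, Σ) = ((2π)^d det Σ)^{-1/2} exp(-(1/2)(x-μ)ᵀ Σ⁻¹ (x-μ))` on `ℝ^d`. -/
noncomputable def gaussPDF (d : ℕ) (μ : Fin d → ℝ) (S : Matrix (Fin d) (Fin d) ℝ)
    (x : Fin d → ℝ) : ℝ :=
  (Real.sqrt ((2 * Real.pi) ^ d * S.det))⁻¹ *
    Real.exp (-(1 / 2) * ((x - μ) ⬝ᵥ (S⁻¹ *ᵥ (x - μ))))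

/-- `J(αₙ) = ISD(p‖q)` regarded as a function of the single mixture weight `αₙ`
of the `n`-th component of `p`, all other weights held fixed. -/
noncomputable def isdWeightFun (d : ℕ) (I₁ I₂ : Type*)
    [Fintype I₁] [Fintype I₂] [DecidableEq I₁]
    (α : I₁ → ℝ) (β : I₂ → ℝ)
    (μ : I₁ → Fin d → ℝ) (m : I₂ → Fin d → ℝ)
    (P : I₁ → Matrix (Fin d) (Fin d) ℝ) (S : I₂ → Matrix (Fin d) (Fin d) ℝ)
    (n : I₁) (t : ℝ) : ℝ :=
  ∫ x : Fin d → ℝ,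
    ((∑ n', Function.update α n t n' * gaussPDF d (μ n') (P n') x)
      - ∑ m', β m' * gaussPDF d (m m') (S m') x) ^ 2

section GaussianIntegral

variable {ι : Type*} [Fintype ι]

theorem exp_neg_half_dotProduct_self_eq_prod (x : ι → ℝ) :
    exp (-(1 / 2) * (x ⬝ᵥ x)) = ∏ i, exp (-(1 / 2) * x i ^ 2) := by
  rw [← exp_sum, dotProduct, mul_sum]
  simp only [sq]

theorem integrable_exp_neg_half_dotProduct_self :
    Integrable (fun x : ι → ℝ => exp (-(1 / 2) * (x ⬝ᵥ x))) := by
  simp_rw [exp_neg_half_dotProduct_self_eq_prod]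
  exact Integrable.fintype_prod (f := fun _ (v : ℝ) => exp (-(1 / 2) * v ^ 2))
    fun _ => integrable_exp_neg_mul_sq (by norm_num)

theorem integral_exp_neg_half_dotProduct_self :
    ∫ x : ι → ℝ, exp (-(1 / 2) * (x ⬝ᵥ x)) = √((2 * π) ^ Fintype.card ι) := by
  simp_rw [exp_neg_half_dotProduct_self_eq_prod]
  rw [integral_fintype_prod_volume_eq_prod (f := fun _ (v : ℝ) => exp (-(1 / 2) * v ^ 2)),
    integral_gaussian, prod_const, card_univ, show π / (1 / 2) = 2 * π by ring,
    ← sqrt_sq (pow_nonneg (sqrt_nonneg _) _), ← pow_mul, mul_comm (Fintype.card ι), pow_mul,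
    sq_sqrt (by positivity)]

theorem continuous_exp_neg_half_dotProduct_self :
    Continuous (fun x : ι → ℝ => exp (-(1 / 2) * (x ⬝ᵥ x))) := by
  fun_prop

end GaussianIntegral

theorem Matrix.PosDef.isSymm {n R : Type*} [Ring R] [PartialOrder R] [StarRing R] [TrivialStar R]
    {M : Matrix n n R} (hM : M.PosDef) : M.IsSymm :=
  isHermitian_iff_isSymm.mp hM.isHermitian

section CompletingSquare

variable {ι : Type*} [Fintype ι]

theorem Matrix.IsSymm.neg_half_dotProduct_mulVec_add_dotProduct_shift [DecidableEq ι]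
    {M : Matrix ι ι ℝ} (hM : M.IsSymm) (hdet : IsUnit M.det) (v x : ι → ℝ) :
    -(1 / 2) * ((x + M⁻¹ *ᵥ v) ⬝ᵥ M *ᵥ (x + M⁻¹ *ᵥ v)) + v ⬝ᵥ (x + M⁻¹ *ᵥ v)
      = (1 / 2) * (v ⬝ᵥ M⁻¹ *ᵥ v) + -(1 / 2) * (x ⬝ᵥ M *ᵥ x) := by
  have hMv : M *ᵥ (M⁻¹ *ᵥ v) = v := by rw [mulVec_mulVec, mul_nonsing_inv _ hdet, one_mulVec]
  have hcross : (M⁻¹ *ᵥ v) ⬝ᵥ M *ᵥ x = v ⬝ᵥ x := by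
    rw [← hM.eq, dotProduct_transpose_mulVec, hM.eq, hMv, dotProduct_comm]
  rw [mulVec_add, hMv, dotProduct_add, add_dotProduct, add_dotProduct, dotProduct_add, hcross,
    dotProduct_comm x v, dotProduct_comm (M⁻¹ *ᵥ v) v]
  ring

theorem Matrix.IsSymm.neg_half_dotProduct_mulVec_add_neg_half_dotProduct_mulVec_add
    {P Q : Matrix ι ι ℝ} (hQ : Q.IsSymm) (u c : ι → ℝ) :
    -(1 / 2) * (u ⬝ᵥ P *ᵥ u) + -(1 / 2) * ((u + c) ⬝ᵥ Q *ᵥ (u + c))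
      = -(1 / 2) * (c ⬝ᵥ Q *ᵥ c) + (-(1 / 2) * (u ⬝ᵥ (P + Q) *ᵥ u) + (-(Q *ᵥ c)) ⬝ᵥ u) := by
  have hcross : c ⬝ᵥ Q *ᵥ u = u ⬝ᵥ Q *ᵥ c := by
    rw [← hQ.eq, dotProduct_transpose_mulVec, hQ.eq]
  simp only [mulVec_add, add_mulVec, dotProduct_add, add_dotProduct, neg_dotProduct, hcross,
    dotProduct_comm (Q *ᵥ c) u]
  ring

end CompletingSquare

section InvAdd

variable {n R : Type*} [Fintype n] [DecidableEq n] [CommRing R] {A B : Matrix n n R}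

theorem Matrix.inv_add_inv_eq (hA : IsUnit A.det) (hB : IsUnit B.det) :
    A⁻¹ + B⁻¹ = A⁻¹ * (A + B) * B⁻¹ := by
  rw [mul_add, nonsing_inv_mul _ hA, add_mul, Matrix.one_mul, Matrix.mul_assoc,
    mul_nonsing_inv _ hB, Matrix.mul_one, add_comm]

theorem Matrix.inv_add_eq_sub (hA : IsUnit A.det) (hB : IsUnit B.det) (hAB : IsUnit (A + B).det) :
    (A + B)⁻¹ = B⁻¹ - B⁻¹ * (A⁻¹ + B⁻¹)⁻¹ * B⁻¹ := by
  have hinv : (A⁻¹ + B⁻¹)⁻¹ = B * (A + B)⁻¹ * A := by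
    rw [inv_add_inv_eq hA hB, mul_inv_rev, mul_inv_rev, nonsing_inv_nonsing_inv _ hA,
      nonsing_inv_nonsing_inv _ hB, Matrix.mul_assoc]
  calc (A + B)⁻¹ = (A + B)⁻¹ * ((A + B) - A) * B⁻¹ := by
        rw [add_sub_cancel_left, Matrix.mul_assoc, mul_nonsing_inv _ hB, Matrix.mul_one]
    _ = B⁻¹ - B⁻¹ * (A⁻¹ + B⁻¹)⁻¹ * B⁻¹ := by
        rw [hinv, Matrix.mul_sub, Matrix.sub_mul, nonsing_inv_mul _ hAB, Matrix.one_mul,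
          ← Matrix.mul_assoc B⁻¹, ← Matrix.mul_assoc B⁻¹, nonsing_inv_mul _ hB, Matrix.one_mul]

end InvAdd

theorem Matrix.det_inv_add_inv {n K : Type*} [Fintype n] [DecidableEq n] [Field K]
    {A B : Matrix n n K} (hA : A.det ≠ 0) (hB : B.det ≠ 0) :
    (A⁻¹ + B⁻¹).det = (A + B).det / (A.det * B.det) := by
  rw [inv_add_inv_eq hA.isUnit hB.isUnit, det_mul, det_mul, det_nonsing_inv, det_nonsing_inv]
  simp only [Ring.inverse_eq_inv']
  ring

namespace Matrix.PosDef

variable {ι : Type*} [Fintype ι] [DecidableEq ι] {M : Matrix ι ι ℝ}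

open scoped MatrixOrder in
theorem exists_map_volume_eq_smul_and_exp_eq_comp (hM : M.PosDef) :
    ∃ T : (ι → ℝ) →ₗ[ℝ] (ι → ℝ),
      Measure.map T volume = ENNReal.ofReal (√M.det)⁻¹ • volume ∧
      (fun x => exp (-(1 / 2) * (x ⬝ᵥ M *ᵥ x))) = (fun y => exp (-(1 / 2) * (y ⬝ᵥ y))) ∘ T := by
  set L := CFC.sqrt M
  have hLL : L * L = M := CFC.sqrt_mul_sqrt_self M hM.posSemidef.nonneg
  have hLT : Lᵀ = L := by
    rw [← conjTranspose_eq_transpose_of_trivial]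
    exact (CFC.sqrt_nonneg M).isSelfAdjoint
  have hdet : L.det * L.det = M.det := by rw [← det_mul, hLL]
  have hLdet : L.det ≠ 0 := fun h => hM.det_pos.ne' (by rw [← hdet, h, zero_mul])
  refine ⟨toLin' L, ?_, ?_⟩
  · rw [Real.map_matrix_volume_pi_eq_smul_volume_pi hLdet, abs_inv, ← hdet, ← sq,
      sqrt_sq_eq_abs]
  · funext x
    rw [Function.comp_apply, toLin'_apply, ← hLL, ← mulVec_mulVec, dotProduct_mulVec,
      ← hLT, vecMul_transpose, hLT]

theorem integrable_exp_neg_half_dotProduct_mulVec (hM : M.PosDef) :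
    Integrable (fun x : ι → ℝ => exp (-(1 / 2) * (x ⬝ᵥ M *ᵥ x))) := by
  obtain ⟨T, hmap, hcomp⟩ := hM.exists_map_volume_eq_smul_and_exp_eq_comp
  rw [hcomp]
  refine (integrable_map_measure ?_ T.continuous_of_finiteDimensional.aemeasurable).mp ?_
  · exact continuous_exp_neg_half_dotProduct_self.aestronglyMeasurable
  · rw [hmap]
    exact integrable_exp_neg_half_dotProduct_self.smul_measure ENNReal.ofReal_ne_top

theorem integral_exp_neg_half_dotProduct_mulVec (hM : M.PosDef) :
    ∫ x : ι → ℝ, exp (-(1 / 2) * (x ⬝ᵥ M *ᵥ x)) = √((2 * π) ^ Fintype.card ι / M.det) := by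
  obtain ⟨T, hmap, hcomp⟩ := hM.exists_map_volume_eq_smul_and_exp_eq_comp
  rw [hcomp, Function.comp_def, ← integral_map T.continuous_of_finiteDimensional.aemeasurable
      continuous_exp_neg_half_dotProduct_self.aestronglyMeasurable, hmap, integral_smul_measure,
    integral_exp_neg_half_dotProduct_self, ENNReal.toReal_ofReal (by positivity), smul_eq_mul,
    ← sqrt_inv, ← sqrt_mul (inv_nonneg.mpr hM.det_pos.le), inv_mul_eq_div]

theorem integrable_exp_neg_half_dotProduct_mulVec_add_dotProduct (hM : M.PosDef) (v : ι → ℝ) :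
    Integrable (fun x : ι → ℝ => exp (-(1 / 2) * (x ⬝ᵥ M *ᵥ x) + v ⬝ᵥ x)) := by
  have hshift := (hM.integrable_exp_neg_half_dotProduct_mulVec.const_mul
    (exp ((1 / 2) * (v ⬝ᵥ M⁻¹ *ᵥ v)))).comp_sub_right (M⁻¹ *ᵥ v)
  refine hshift.congr (.of_forall fun x => ?_)
  have := hM.isSymm.neg_half_dotProduct_mulVec_add_dotProduct_shift hM.det_pos.ne'.isUnit v
    (x - M⁻¹ *ᵥ v)
  simp only [sub_add_cancel] at this
  simp only [← exp_add, this]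

theorem integral_exp_neg_half_dotProduct_mulVec_add_dotProduct (hM : M.PosDef) (v : ι → ℝ) :
    ∫ x : ι → ℝ, exp (-(1 / 2) * (x ⬝ᵥ M *ᵥ x) + v ⬝ᵥ x)
      = √((2 * π) ^ Fintype.card ι / M.det) * exp ((1 / 2) * (v ⬝ᵥ M⁻¹ *ᵥ v)) := by
  rw [← integral_add_right_eq_self _ (M⁻¹ *ᵥ v)]
  simp_rw [hM.isSymm.neg_half_dotProduct_mulVec_add_dotProduct_shift hM.det_pos.ne'.isUnit,
    exp_add]
  rw [integral_const_mul, hM.integral_exp_neg_half_dotProduct_mulVec, mul_comm]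

end Matrix.PosDef

section GaussianProduct

variable {d : ℕ} {A B : Matrix (Fin d) (Fin d) ℝ}

theorem gaussPDF_mul_gaussPDF (hB : B.IsSymm) (a b x : Fin d → ℝ) :
    gaussPDF d a A x * gaussPDF d b B x
      = ((√((2 * π) ^ d * A.det))⁻¹ * (√((2 * π) ^ d * B.det))⁻¹
          * exp (-(1 / 2) * ((a - b) ⬝ᵥ B⁻¹ *ᵥ (a - b))))
        * exp (-(1 / 2) * ((x - a) ⬝ᵥ (A⁻¹ + B⁻¹) *ᵥ (x - a))
            + (-(B⁻¹ *ᵥ (a - b))) ⬝ᵥ (x - a)) := by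
  rw [gaussPDF, gaussPDF, mul_mul_mul_comm, ← exp_add, mul_assoc _ (exp _), ← exp_add,
    ← sub_add_sub_cancel x a b,
    hB.inv.neg_half_dotProduct_mulVec_add_neg_half_dotProduct_mulVec_add]

theorem integrable_gaussPDF_mul_gaussPDF (hA : A.PosDef) (hB : B.PosDef) (a b : Fin d → ℝ) :
    Integrable (fun x => gaussPDF d a A x * gaussPDF d b B x) := by
  simp_rw [gaussPDF_mul_gaussPDF hB.isSymm]
  exact (((hA.inv.add hB.inv).integrable_exp_neg_half_dotProduct_mulVec_add_dotProduct
    _).comp_sub_right a).const_mul _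

theorem exp_neg_half_dotProduct_inv_add_mulVec (hA : A.PosDef) (hB : B.PosDef) (c : Fin d → ℝ) :
    exp (-(1 / 2) * (c ⬝ᵥ B⁻¹ *ᵥ c))
        * exp ((1 / 2) * ((-(B⁻¹ *ᵥ c)) ⬝ᵥ (A⁻¹ + B⁻¹)⁻¹ *ᵥ (-(B⁻¹ *ᵥ c))))
      = exp (-(1 / 2) * (c ⬝ᵥ (A + B)⁻¹ *ᵥ c)) := by
  have hswap : (B⁻¹ *ᵥ c) ⬝ᵥ (A⁻¹ + B⁻¹)⁻¹ *ᵥ (B⁻¹ *ᵥ c)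
      = c ⬝ᵥ (B⁻¹ * (A⁻¹ + B⁻¹)⁻¹ * B⁻¹) *ᵥ c := by
    rw [dotProduct_comm, ← hB.inv.isSymm.eq, dotProduct_transpose_mulVec, hB.inv.isSymm.eq,
      mulVec_mulVec, mulVec_mulVec]
  rw [← exp_add, mulVec_neg, neg_dotProduct, dotProduct_neg, neg_neg, hswap,
    inv_add_eq_sub hA.det_pos.ne'.isUnit hB.det_pos.ne'.isUnit (hA.add hB).det_pos.ne'.isUnit,
    sub_mulVec, dotProduct_sub]
  ring_nf

theorem inv_sqrt_mul_inv_sqrt_mul_sqrt_div_det_inv_add_inv (hA : A.PosDef) (hB : B.PosDef) :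
    (√((2 * π) ^ d * A.det))⁻¹ * (√((2 * π) ^ d * B.det))⁻¹
      * √((2 * π) ^ d / (A⁻¹ + B⁻¹).det) = (√((2 * π) ^ d * (A + B).det))⁻¹ := by
  have hA' := hA.det_pos
  have hB' := hB.det_pos
  have hAB := (hA.add hB).det_pos
  rw [det_inv_add_inv hA'.ne' hB'.ne', div_div_eq_mul_div, ← sqrt_inv, ← sqrt_inv, ← sqrt_inv,
    ← sqrt_mul (by positivity), ← sqrt_mul (by positivity)]
  congr 1
  field_simp

theorem integral_gaussPDF_mul_gaussPDF (hA : A.PosDef) (hB : B.PosDef) (a b : Fin d → ℝ) :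
    ∫ x, gaussPDF d a A x * gaussPDF d b B x = gaussPDF d b (A + B) a := by
  simp_rw [gaussPDF_mul_gaussPDF hB.isSymm]
  rw [integral_const_mul, integral_sub_right_eq_self (fun u => exp (-(1 / 2) *
      (u ⬝ᵥ (A⁻¹ + B⁻¹) *ᵥ u) + (-(B⁻¹ *ᵥ (a - b))) ⬝ᵥ u)) a,
    (hA.inv.add hB.inv).integral_exp_neg_half_dotProduct_mulVec_add_dotProduct, Fintype.card_fin,
    gaussPDF, ← inv_sqrt_mul_inv_sqrt_mul_sqrt_div_det_inv_add_inv hA hB,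
    ← exp_neg_half_dotProduct_inv_add_mulVec hA hB]
  ring

end GaussianProduct

section GaussianDensity

variable {d : ℕ} {S : Matrix (Fin d) (Fin d) ℝ}

theorem continuous_gaussPDF (a : Fin d → ℝ) :
    Continuous (gaussPDF d a S) := by
  unfold gaussPDF
  fun_prop

theorem gaussPDF_self (a : Fin d → ℝ) :
    gaussPDF d a S a = (√((2 * π) ^ d * S.det))⁻¹ := by
  simp [gaussPDF]

theorem gaussPDF_pos (hS : S.PosDef) (a x : Fin d → ℝ) : 0 < gaussPDF d a S x := by
  have := hS.det_pos
  unfold gaussPDF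
  positivity

theorem memLp_two_gaussPDF (hS : S.PosDef) (a : Fin d → ℝ) : MemLp (gaussPDF d a S) 2 :=
  (memLp_two_iff_integrable_sq (continuous_gaussPDF a).aestronglyMeasurable).mpr <| by
    simpa only [sq] using integrable_gaussPDF_mul_gaussPDF hS hS a a

end GaussianDensity

theorem Finset.sum_update_zero_mul {ι R : Type*} [Fintype ι] [DecidableEq ι]
    [NonUnitalNonAssocSemiring R] (w f : ι → R) (i : ι) :
    ∑ j, Function.update w i 0 j * f j = ∑ j ∈ univ.erase i, w j * f j := by
  rw [← add_sum_erase _ _ (mem_univ i), Function.update_self, zero_mul, zero_add]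
  exact sum_congr rfl fun j hj => by rw [Function.update_of_ne (ne_of_mem_erase hj)]

noncomputable def gaussMixture (d : ℕ) {ι : Type*} [Fintype ι] (w : ι → ℝ)
    (μ : ι → Fin d → ℝ) (S : ι → Matrix (Fin d) (Fin d) ℝ) (x : Fin d → ℝ) : ℝ :=
  ∑ i, w i * gaussPDF d (μ i) (S i) x

section GaussianMixture

variable {d : ℕ} {ι : Type*} [Fintype ι] {S : ι → Matrix (Fin d) (Fin d) ℝ}

theorem memLp_two_gaussMixture (hS : ∀ i, (S i).PosDef) (w : ι → ℝ) (μ : ι → Fin d → ℝ) :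
    MemLp (gaussMixture d w μ S) 2 := by
  have := memLp_finsetSum' univ fun i _ => (memLp_two_gaussPDF (hS i) (μ i)).const_mul (w i)
  convert this using 1
  ext x
  simp [gaussMixture]

theorem integral_gaussPDF_mul_gaussMixture {A : Matrix (Fin d) (Fin d) ℝ} (hA : A.PosDef)
    (hS : ∀ i, (S i).PosDef) (a : Fin d → ℝ) (w : ι → ℝ) (μ : ι → Fin d → ℝ) :
    ∫ x, gaussPDF d a A x * gaussMixture d w μ S x = ∑ i, w i * gaussPDF d (μ i) (A + S i) a := by
  simp_rw [gaussMixture, mul_sum, mul_left_comm (gaussPDF d a A _)]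
  rw [integral_finsetSum _ fun i _ =>
    (integrable_gaussPDF_mul_gaussPDF hA (hS i) a (μ i)).const_mul _]
  exact sum_congr rfl fun i _ => by
    rw [integral_const_mul, integral_gaussPDF_mul_gaussPDF hA (hS i)]

theorem integral_gaussPDF_mul_gaussMixture_sub_gaussMixture {κ : Type*} [Fintype κ]
    {A : Matrix (Fin d) (Fin d) ℝ} {T : κ → Matrix (Fin d) (Fin d) ℝ} (hA : A.PosDef)
    (hS : ∀ i, (S i).PosDef) (hT : ∀ k, (T k).PosDef) (a : Fin d → ℝ) (w : ι → ℝ)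
    (μ : ι → Fin d → ℝ) (v : κ → ℝ) (ν : κ → Fin d → ℝ) :
    ∫ x, gaussPDF d a A x * (gaussMixture d w μ S x - gaussMixture d v ν T x)
      = ∑ i, w i * gaussPDF d (μ i) (A + S i) a - ∑ k, v k * gaussPDF d (ν k) (A + T k) a := by
  have hg := memLp_two_gaussPDF hA a
  have hw : Integrable (fun x => gaussPDF d a A x * gaussMixture d w μ S x) :=
    hg.integrable_mul (memLp_two_gaussMixture hS w μ)
  have hv : Integrable (fun x => gaussPDF d a A x * gaussMixture d v ν T x) :=
    hg.integrable_mul (memLp_two_gaussMixture hT v ν)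
  simp_rw [mul_sub]
  rw [integral_sub hw hv,
    integral_gaussPDF_mul_gaussMixture hA hS, integral_gaussPDF_mul_gaussMixture hA hT]

theorem gaussMixture_update [DecidableEq ι] (w : ι → ℝ) (μ : ι → Fin d → ℝ) (i : ι) (t : ℝ)
    (x : Fin d → ℝ) :
    gaussMixture d (Function.update w i t) μ S x
      = t * gaussPDF d (μ i) (S i) x + gaussMixture d (Function.update w i 0) μ S x := by
  simp only [gaussMixture]
  rw [← add_sum_erase _ _ (mem_univ i), ← add_sum_erase _ _ (mem_univ i), Function.update_self,
    Function.update_self, zero_mul, zero_add]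
  congr 1
  exact sum_congr rfl fun j hj => by simp only [Function.update_of_ne (ne_of_mem_erase hj)]

end GaussianMixture

theorem integral_mul_add_sq {α : Type*} [MeasurableSpace α] {ν : Measure α} {f g : α → ℝ}
    (hf : MemLp f 2 ν) (hg : MemLp g 2 ν) (t : ℝ) :
    ∫ x, (t * f x + g x) ^ 2 ∂ν
      = t ^ 2 * ∫ x, f x * f x ∂ν + 2 * t * ∫ x, f x * g x ∂ν + ∫ x, g x * g x ∂ν := by
  have hff : Integrable (fun x => f x * f x) ν := hf.integrable_mul hf
  have hfg : Integrable (fun x => f x * g x) ν := hf.integrable_mul hg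
  have hgg : Integrable (fun x => g x * g x) ν := hg.integrable_mul hg
  rw [← integral_const_mul, ← integral_const_mul,
    ← integral_add (hff.const_mul _) (hfg.const_mul _), ← integral_add _ hgg]
  · congr 1
    ext x
    ring
  · exact (hff.const_mul _).add (hfg.const_mul _)

theorem unique_minimizer_of_eq_quadratic {f : ℝ → ℝ} {a b c s : ℝ}
    (hf : ∀ t, f t = t ^ 2 * a + 2 * t * b + c) (ha : 0 < a) (hs : a * s + b = 0) :
    (∀ t, f s ≤ f t) ∧ ∀ t, t ≠ s → f s < f t := by
  have hdiff : ∀ t, f t - f s = a * (t - s) ^ 2 := fun t => by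
    rw [hf, hf]
    linear_combination 2 * (t - s) * hs
  refine ⟨fun t => ?_, fun t ht => ?_⟩
  · linarith [hdiff t, mul_nonneg ha.le (sq_nonneg (t - s))]
  · linarith [hdiff t, mul_pos ha (sq_pos_of_ne_zero (sub_ne_zero.mpr ht))]

theorem isdWeightFun_eq_integral_gaussMixture (d : ℕ) (I₁ I₂ : Type*) [Fintype I₁] [Fintype I₂]
    [DecidableEq I₁] (α : I₁ → ℝ) (β : I₂ → ℝ) (μ : I₁ → Fin d → ℝ) (m : I₂ → Fin d → ℝ)
    (P : I₁ → Matrix (Fin d) (Fin d) ℝ) (S : I₂ → Matrix (Fin d) (Fin d) ℝ) (n : I₁) (t : ℝ) :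
    isdWeightFun d I₁ I₂ α β μ m P S n t
      = ∫ x, (gaussMixture d (Function.update α n t) μ P x - gaussMixture d β m S x) ^ 2 :=
  rfl

/-- (Lemma 1) The weight
`αₙ* = (2π)^{d/2} (det(2Pₙ))^{1/2} [ Σₘ βₘ N(μₙ; mₘ, Pₙ+Sₘ) − Σ_{n'≠n} α_{n'} N(μₙ; μ_{n'}, Pₙ+P_{n'}) ]`
is the unique global minimizer over `αₙ ∈ ℝ` of `αₙ ↦ ISD(p‖q)`. -/
theorem isd_single_weight_unique_minimizer (d : ℕ) (I₁ I₂ : Type*)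
    [Fintype I₁] [Fintype I₂] [DecidableEq I₁]
    (α : I₁ → ℝ) (β : I₂ → ℝ)
    (μ : I₁ → Fin d → ℝ) (m : I₂ → Fin d → ℝ)
    (P : I₁ → Matrix (Fin d) (Fin d) ℝ) (S : I₂ → Matrix (Fin d) (Fin d) ℝ)
    (hP : ∀ n, (P n).PosDef) (hS : ∀ m', (S m').PosDef) (n : I₁)
    (αstar : ℝ)
    (hαstar : αstar = Real.sqrt ((2 * Real.pi) ^ d * ((2 : ℝ) • P n).det) *
        ((∑ m', β m' * gaussPDF d (m m') (P n + S m') (μ n))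
          - ∑ n' ∈ Finset.univ.erase n, α n' * gaussPDF d (μ n') (P n + P n') (μ n))) :
    (∀ a : ℝ, isdWeightFun d I₁ I₂ α β μ m P S n αstar
        ≤ isdWeightFun d I₁ I₂ α β μ m P S n a)
      ∧ ∀ a : ℝ, a ≠ αstar →
          isdWeightFun d I₁ I₂ α β μ m P S n αstar
            < isdWeightFun d I₁ I₂ α β μ m P S n a := by
  set g := gaussPDF d (μ n) (P n)
  set r := fun x => gaussMixture d (Function.update α n 0) μ P x - gaussMixture d β m S x
  have hg : MemLp g 2 := memLp_two_gaussPDF (hP n) (μ n)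
  have hr : MemLp r 2 := (memLp_two_gaussMixture hP _ μ).sub (memLp_two_gaussMixture hS β m)
  have h2P : ((2 : ℝ) • P n).PosDef := (hP n).smul two_pos
  refine unique_minimizer_of_eq_quadratic (a := ∫ x, g x * g x) (b := ∫ x, g x * r x)
    (c := ∫ x, r x * r x) (fun t => ?_) ?_ ?_
  · rw [isdWeightFun_eq_integral_gaussMixture, ← integral_mul_add_sq hg hr]
    refine integral_congr_ae (.of_forall fun x => ?_)
    simp only [r, g, gaussMixture_update α μ n t x]
    ring
  · rw [integral_gaussPDF_mul_gaussPDF (hP n) (hP n)]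
    exact gaussPDF_pos ((hP n).add (hP n)) _ _
  · have := h2P.det_pos
    rw [integral_gaussPDF_mul_gaussPDF (hP n) (hP n), ← two_smul ℝ, gaussPDF_self,
      integral_gaussPDF_mul_gaussMixture_sub_gaussMixture (hP n) hP hS, sum_update_zero_mul,
      hαstar, ← mul_assoc, inv_mul_cancel₀ (by positivity), one_mul]
    ring
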